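/- arXiv:2410.04770 — 7 statements merged into one kernel-verified Lean document; each statement's English description precedes it below -/
import Mathlib

section
/- For w ∈ ℝⁿ, the vectors w and (P₂w)⊙(P₂w) (the componentwise square of the cyclic shift of w) are linearly dependent if and only if w is a scalar multiple of the all-ones vector 𝟏 = (1,…,1). -/
open Fin.NatCast Fin.CommRing in
lemma double_cycle_zero (n : ℕ) [NeZero n] (t : Fin n → ℝ)
    (h : ∀ i, t i = 2 * t (i + 1)) : ∀ i, t i = 0 := by
  have key : ∀ k : ℕ, ∀ i : Fin n, t i = 2 ^ k * t (i + (k : Fin n)) := by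
    intro k
    induction k with
    | zero => intro i; simp
    | succ k ih =>
      intro i
      have hc : ((k + 1 : ℕ) : Fin n) = (k : Fin n) + 1 := by push_cast; ring
      rw [hc, ← add_assoc, ih i, h (i + (k : Fin n))]
      ring
  intro i
  have hn := key n i
  rw [Fin.natCast_self, add_zero] at hn
  have h2 : (1 : ℝ) < 2 ^ n := one_lt_pow₀ one_lt_two (NeZero.ne n)
  nlinarith [hn, h2]

open Fin.NatCast Fin.CommRing in
lemma zero_prop (n : ℕ) [NeZero n] (w : Fin n → ℝ) (c : ℝ) (hc : c ≠ 0)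
    (hrel : ∀ i, w i = c * (w (i + 1) * w (i + 1)))
    (i0 : Fin n) (h0 : w i0 = 0) : ∀ j, w j = 0 := by
  have key : ∀ k : ℕ, w (i0 + (k : Fin n)) = 0 := by
    intro k
    induction k with
    | zero => simpa using h0
    | succ k ih =>
      have := hrel (i0 + (k : Fin n))
      rw [ih] at this
      have hsq : w (i0 + (k : Fin n) + 1) * w (i0 + (k : Fin n) + 1) = 0 := by
        field_simp at this
        rw [← sq]
        exact (mul_eq_zero.mp this.symm).resolve_left hc
      have hz : w (i0 + (k : Fin n) + 1) = 0 := by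
        exact mul_self_eq_zero.mp hsq
      have hc2 : ((k + 1 : ℕ) : Fin n) = (k : Fin n) + 1 := by push_cast; ring
      rw [hc2, ← add_assoc]
      exact hz
  intro j
  have := key ((j - i0 : Fin n) : ℕ)
  rwa [Fin.cast_val_eq_self, show i0 + (j - i0) = j by ring] at this

/-- w and (P₂w)⊙(P₂w) are linearly dependent iff w ∈ span{𝟏}, where
(P₂w)ᵢ = w_{i+1 mod n}. -/
theorem dep_iff_diagonal (n : ℕ) [NeZero n] (w : Fin n → ℝ) :
    ¬ LinearIndependent ℝ ![w, fun i => w (i + 1) * w (i + 1)] ↔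
      ∃ lam : ℝ, w = lam • (fun _ => (1 : ℝ) : Fin n → ℝ) := by
  rw [LinearIndependent.pair_iff]
  push_neg
  constructor
  · rintro ⟨s, t, hst, hne⟩
    have hpt : ∀ i, s * w i + t * (w (i + 1) * w (i + 1)) = 0 := by
      intro i
      have := congrFun hst i
      simpa using this
    by_cases hs : s = 0
    · -- then t ≠ 0 and all squares vanish, so w = 0
      have ht : t ≠ 0 := hne hs
      have hw0 : ∀ j, w j = 0 := by
        have hsq : ∀ i, w (i + 1) = 0 := by
          intro i
          have := hpt i
          rw [hs, zero_mul, zero_add] at this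
          have := mul_eq_zero.mp this
          rcases this with h | h
          · exact absurd h ht
          · exact mul_self_eq_zero.mp h
        intro j
        have := hsq (j - 1)
        rwa [show j - 1 + 1 = j by simp] at this
      exact ⟨0, by funext j; simp [hw0 j]⟩
    · set c : ℝ := -t / s with hcdef
      have hrel : ∀ i, w i = c * (w (i + 1) * w (i + 1)) := by
        intro i
        have := hpt i
        rw [hcdef]
        field_simp
        linarith
      by_cases hc : c = 0
      · exact ⟨0, by funext j; simp [hrel j, hc]⟩
      by_cases hz : ∃ i0, w i0 = 0
      · obtain ⟨i0, h0⟩ := hz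
        exact ⟨0, by funext j; simp [zero_prop n w c hc hrel i0 h0 j]⟩
      · push_neg at hz
        -- all entries nonzero; log argument
        set u : Fin n → ℝ := fun i => Real.log |w i| + Real.log |c| with hu
        have hstep : ∀ i, u i = 2 * u (i + 1) := by
          intro i
          have hne1 : |w (i + 1)| ≠ 0 := abs_ne_zero.mpr (hz (i + 1))
          have habs : |w i| = |c| * (|w (i + 1)| * |w (i + 1)|) := by
            rw [hrel i, abs_mul, abs_mul]
          have hl : Real.log |w i| = Real.log |c| + 2 * Real.log |w (i + 1)| := by
            rw [habs, Real.log_mul (abs_ne_zero.mpr hc) (mul_ne_zero hne1 hne1),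
              Real.log_mul hne1 hne1]
            ring
          show Real.log |w i| + Real.log |c| = 2 * (Real.log |w (i + 1)| + Real.log |c|)
          rw [hl]; ring
        have hzero := double_cycle_zero n u hstep
        have habs' : ∀ i, |w i| = |c|⁻¹ := by
          intro i
          have h0 := hzero i
          have hl0 : Real.log |w i| = Real.log |c|⁻¹ := by
            rw [Real.log_inv]
            have : Real.log |w i| + Real.log |c| = 0 := h0
            linarith
          have := congrArg Real.exp hl0
          rwa [Real.exp_log (abs_pos.mpr (hz i)),
            Real.exp_log (inv_pos.mpr (abs_pos.mpr hc))] at this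
        refine ⟨1 / c, funext fun i => ?_⟩
        have e1 : w (i + 1) * w (i + 1) = |c|⁻¹ * |c|⁻¹ := by
          rw [← abs_mul_abs_self, habs' (i + 1)]
        have e2 : |c|⁻¹ * |c|⁻¹ = (c * c)⁻¹ := by
          rw [← mul_inv, abs_mul_abs_self]
        simp only [Pi.smul_apply, smul_eq_mul, mul_one]
        rw [hrel i, e1, e2]
        field_simp
  · rintro ⟨lam, rfl⟩
    by_cases hl : lam = 0
    · refine ⟨1, 0, ?_, by norm_num⟩
      funext i
      simp [hl]
    · refine ⟨lam ^ 2, -lam, ?_, fun h => absurd h (pow_ne_zero 2 hl)⟩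
      funext i
      simp
      ring
end

section
/- In ℝ³ with S(x) the cross-product matrix (S(x)y = x × y) and Δ_ξ = diag(ξ₁,ξ₂,ξ₃) with all ξᵢ > 0, for any vectors b₁, b₂ and fᵢ = Δ_ξ⁻¹bᵢ (i=1,2), the following are equivalent: (1) span{f₁, f₂, Δ_ξ⁻¹S(αf₁+βf₂)Δ_ξ(αf₁+βf₂) : α,β ∈ ℝ} = ℝ³; (2) span{b₁, b₂, S(αb₁+βb₂)Δ_ξ⁻¹(αb₁+βb₂) : α,β ∈ ℝ} = ℝ³. -/
open Matrix

/-!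
Write `Δ` for the diagonal scaling `v ↦ ξ * v`, so that `fᵢ = Δ⁻¹ bᵢ` and, for `v = α b₁ + β b₂`,
`α f₁ + β f₂ = Δ⁻¹ v`. The third vector of the first family is `Δ⁻¹ (Δ⁻¹ v × v)`, so applying `Δ`
to the first family yields `b₁`, `b₂` and `Δ⁻¹ v × v = -(v × Δ⁻¹ v)`, i.e. the second family up to
the sign of its third member. A linear automorphism preserves spanning, and flipping signs does not
change a span.
-/

namespace Submodule

variable {R M N : Type*} [Ring R] [AddCommGroup M] [AddCommGroup N] [Module R M] [Module R N]

theorem span_union_neg (s t : Set M) : span R (s ∪ -t) = span R (s ∪ t) := by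
  rw [span_union, span_union, span_neg]

theorem span_image_linearEquiv_eq_top_iff (e : M ≃ₗ[R] N) (s : Set M) :
    span R (e '' s) = ⊤ ↔ span R s = ⊤ := by
  simp

theorem span_pair_union_eq_top_iff_of_linearEquiv (e : M ≃ₗ[R] N) (b₁ b₂ : N) (g : M → M)
    (h : N → N) (hgh : ∀ v, e (g (e.symm v)) = -h v) :
    span R ({e.symm b₁, e.symm b₂} ∪
        {x | ∃ α β : R, x = g (α • e.symm b₁ + β • e.symm b₂)}) = ⊤ ↔
      span R ({b₁, b₂} ∪ {x | ∃ α β : R, x = h (α • b₁ + β • b₂)}) = ⊤ := by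
  have hconj (α β : R) : e (g (α • e.symm b₁ + β • e.symm b₂)) = -h (α • b₁ + β • b₂) := by
    rw [← hgh, map_add, map_smul, map_smul]
  have himage : e '' {x | ∃ α β : R, x = g (α • e.symm b₁ + β • e.symm b₂)} =
      -{x | ∃ α β : R, x = h (α • b₁ + β • b₂)} := by
    ext x
    constructor
    · rintro ⟨_, ⟨α, β, rfl⟩, rfl⟩
      exact ⟨α, β, by rw [hconj, neg_neg]⟩
    · rintro ⟨α, β, hx⟩
      exact ⟨_, ⟨α, β, rfl⟩, by rw [hconj, ← hx, neg_neg]⟩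
  rw [← span_image_linearEquiv_eq_top_iff e, ← span_union_neg, Set.image_union, Set.image_pair,
    e.apply_symm_apply, e.apply_symm_apply, himage]

end Submodule

def diagonalEquiv {K ι : Type*} [Field K] (ξ : ι → K) (hξ : ∀ i, ξ i ≠ 0) :
    (ι → K) ≃ₗ[K] (ι → K) where
  toFun v i := ξ i * v i
  invFun v i := (ξ i)⁻¹ * v i
  map_add' v w := by ext i; simp [mul_add]
  map_smul' c v := by ext i; simp [mul_left_comm]
  left_inv v := by ext i; simp [hξ i]
  right_inv v := by ext i; simp [hξ i]

/-- Crouch-condition equivalence for the rigid body: with fᵢ = Δ_ξ⁻¹bᵢ,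
span{f₁, f₂, Δ_ξ⁻¹S(αf₁+βf₂)Δ_ξ(αf₁+βf₂)} = ℝ³ iff
span{b₁, b₂, S(αb₁+βb₂)Δ_ξ⁻¹(αb₁+βb₂)} = ℝ³,
where S(x)y = x × y and Δ_ξ = diag(ξ₁,ξ₂,ξ₃), ξᵢ > 0. -/
theorem rigid_body_crouch_equiv (ξ : Fin 3 → ℝ) (hξ : ∀ i, 0 < ξ i)
    (b₁ b₂ : Fin 3 → ℝ)
    (f₁ f₂ : Fin 3 → ℝ)
    (hf₁ : f₁ = fun i => (ξ i)⁻¹ * b₁ i)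
    (hf₂ : f₂ = fun i => (ξ i)⁻¹ * b₂ i) :
    (Submodule.span ℝ ({f₁, f₂} ∪
        {x | ∃ α β : ℝ, x = fun i => (ξ i)⁻¹ *
          (crossProduct (α • f₁ + β • f₂) (fun j => ξ j * (α • f₁ + β • f₂) j)) i})
      = ⊤) ↔
    (Submodule.span ℝ ({b₁, b₂} ∪
        {x | ∃ α β : ℝ, x =
          crossProduct (α • b₁ + β • b₂) (fun j => (ξ j)⁻¹ * (α • b₁ + β • b₂) j)})
      = ⊤) := by
  subst hf₁ hf₂
  let Δ := diagonalEquiv ξ fun i => (hξ i).ne'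
  refine Submodule.span_pair_union_eq_top_iff_of_linearEquiv Δ b₁ b₂
    (fun u => Δ.symm (u ⨯₃ Δ u)) (fun v => v ⨯₃ Δ.symm v) fun v => ?_
  rw [Δ.apply_symm_apply, Δ.apply_symm_apply, cross_anticomm]
end

section
/- For the Sprott system linearization matrix L = −(μI₃ + P₃) in ℝ³ (where P₃ is the cyclic permutation matrix sending x to (x₃,x₁,x₂)) and any f ∈ ℝ³, det[f, Lf, L²f] = −(1/2)(fᵀ𝟏)(fᵀHf), where H is the Hessian of the quadratic form x² + y² + z² − (yz + zx + xy), i.e., H = 2I₃ − (𝟏𝟏ᵀ − I₃) adjusted so fᵀHf = 2(f₁²+f₂²+f₃²) − 2(f₁f₂+f₂f₃+f₃f₁). -/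
/-!
Write `L = -P₃ - μ I₃`. Replacing `A` by `s A + c I` multiplies the Krylov matrix `[f, Af, A²f]`
by a triangular matrix with diagonal `1, s, s²`, so its determinant only changes by `s³ = -1`.
For the cyclic shift `P₃` the Krylov matrix is circulant, with determinant
`a³ + b³ + c³ - 3abc = ½ (a + b + c) ((a - b)² + (b - c)² + (c - a)²)`.
-/

open Matrix

namespace Matrix

variable {R : Type*} [CommRing R]

/-- The rows `f, A f, A² f`: the transpose of the matrix `[f, Af, A²f]` of the statement. -/
def krylov {n : Type*} [Fintype n] (A : Matrix n n R) (f : n → R) : Matrix (Fin 3) n R :=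
  of ![f, A *ᵥ f, A *ᵥ (A *ᵥ f)]

theorem krylov_smul_add_smul_one {n : Type*} [Fintype n] [DecidableEq n]
    (A : Matrix n n R) (s c : R) (f : n → R) :
    krylov (s • A + c • 1) f = !![1, 0, 0; c, s, 0; c ^ 2, 2 * c * s, s ^ 2] * krylov A f := by
  have h₁ : (s • A + c • 1) *ᵥ f = s • (A *ᵥ f) + c • f := by
    rw [add_mulVec, smul_mulVec, smul_mulVec, one_mulVec]
  have h₂ : (s • A + c • 1) *ᵥ ((s • A + c • 1) *ᵥ f) =
      s ^ 2 • (A *ᵥ (A *ᵥ f)) + (2 * c * s) • (A *ᵥ f) + c ^ 2 • f := by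
    rw [h₁, add_mulVec, smul_mulVec, smul_mulVec, one_mulVec, mulVec_add, mulVec_smul, mulVec_smul]
    module
  rw [krylov, krylov, h₂, h₁]
  ext i j
  fin_cases i <;>
    simp only [mul_apply, Fin.sum_univ_three, of_apply, cons_val', cons_val_zero, cons_val_one,
      cons_val_two, cons_val_fin_one, head_cons, tail_cons, head_fin_const, Pi.add_apply,
      Pi.smul_apply, smul_eq_mul, Fin.zero_eta, Fin.mk_one, Fin.reduceFinMk] <;>
    ring

theorem det_krylov_smul_add_smul_one (A : Matrix (Fin 3) (Fin 3) R) (s c : R) (f : Fin 3 → R) :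
    (krylov (s • A + c • 1) f).det = s ^ 3 * (krylov A f).det := by
  rw [krylov_smul_add_smul_one, det_mul, det_fin_three]
  simp only [of_apply, cons_val', cons_val_zero, cons_val_one, cons_val_two, empty_val',
    cons_val_fin_one, head_cons, tail_cons, head_fin_const]
  ring

theorem det_krylov_cyclicShift (f : Fin 3 → R) :
    (krylov !![0, 0, 1; 1, 0, 0; 0, 1, 0] f).det =
      f 0 ^ 3 + f 1 ^ 3 + f 2 ^ 3 - 3 * f 0 * f 1 * f 2 := by
  rw [krylov, det_fin_three]
  simp only [of_apply, cons_val', cons_val_zero, cons_val_one, cons_val_two, cons_val_fin_one,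
    mulVec, dotProduct, Fin.sum_univ_three, head_cons, tail_cons, head_fin_const]
  ring

end Matrix

/-- Sprott determinant identity: for L = −(μI₃ + P₃),
det[f, Lf, L²f] = −(1/2)(fᵀ𝟏)(fᵀHf), where
fᵀHf = 2(f₁²+f₂²+f₃²) − 2(f₁f₂+f₂f₃+f₃f₁). -/
theorem sprott_det_identity (μ : ℝ) (f : Fin 3 → ℝ)
    (L : Matrix (Fin 3) (Fin 3) ℝ)
    (hL : L = !![-μ, 0, -1; -1, -μ, 0; 0, -1, -μ]) :
    (Matrix.of ![f, L.mulVec f, L.mulVec (L.mulVec f)]).transpose.det =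
      -(1 / 2 : ℝ) * (f 0 + f 1 + f 2) *
        (2 * (f 0 ^ 2 + f 1 ^ 2 + f 2 ^ 2) - 2 * (f 0 * f 1 + f 1 * f 2 + f 2 * f 0)) := by
  have hL' : L = (-1 : ℝ) • !![0, 0, 1; 1, 0, 0; 0, 1, 0] + (-μ) • 1 := by
    rw [hL]
    ext i j
    fin_cases i <;> fin_cases j <;> simp
  rw [det_transpose, ← krylov, hL', det_krylov_smul_add_smul_one, det_krylov_cyclicShift]
  ring
end

section
/- The Sprott system with matrix L = −(μI₃ + P₃) and drift f₀(x) = Lx + (x₂², x₃², x₁²)ᵀ has controllable linearization at the origin (i.e., det[f, Lf, L²f] ≠ 0) for a single control vector f ∈ ℝ³ if and only if f ∉ span{𝟏} ∪ span{𝟏}^⊥, where 𝟏 = (1,1,1). -/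
open Matrix

/-- Sprott linearization controllability: det[f, Lf, L²f] ≠ 0 iff
f ∉ span{𝟏} ∪ span{𝟏}^⊥ (the latter being {g | ⟨g,𝟏⟩ = 0}). -/
theorem sprott_linearization_controllable_iff (μ : ℝ) (f : Fin 3 → ℝ)
    (L : Matrix (Fin 3) (Fin 3) ℝ)
    (hL : L = !![-μ, 0, -1; -1, -μ, 0; 0, -1, -μ]) :
    (Matrix.of ![f, L.mulVec f, L.mulVec (L.mulVec f)]).transpose.det ≠ 0 ↔
      f ∉ (↑(Submodule.span ℝ {(fun _ => (1:ℝ) : Fin 3 → ℝ)}) ∪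
        {g : Fin 3 → ℝ | g ⬝ᵥ (fun _ => (1:ℝ)) = 0}) := by
  subst hL
  set a := f 0 with ha
  set b := f 1 with hb
  set c := f 2 with hc
  have hdet : (Matrix.of ![f, Matrix.mulVec !![-μ, 0, -1; -1, -μ, 0; 0, -1, -μ] f,
      Matrix.mulVec !![-μ, 0, -1; -1, -μ, 0; 0, -1, -μ]
        (Matrix.mulVec !![-μ, 0, -1; -1, -μ, 0; 0, -1, -μ] f)]).transpose.det =
      -((a + b + c) * (a^2 + b^2 + c^2 - a*b - b*c - c*a)) := by
    simp [Matrix.det_fin_three, Matrix.mulVec, dotProduct, Fin.sum_univ_three,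
      Matrix.vecHead, Matrix.vecTail]
    ring
  rw [hdet]
  have hspan : f ∈ (Submodule.span ℝ {(fun _ => (1:ℝ) : Fin 3 → ℝ)}) ↔ (a = b ∧ b = c) := by
    rw [Submodule.mem_span_singleton]
    constructor
    · rintro ⟨t, ht⟩
      have h0 := congrFun ht 0
      have h1 := congrFun ht 1
      have h2 := congrFun ht 2
      simp [Pi.smul_apply] at h0 h1 h2
      exact ⟨h0.symm.trans h1, h1.symm.trans h2⟩
    · rintro ⟨h1, h2⟩
      refine ⟨a, ?_⟩
      funext i
      have hi : (a • fun _ => (1:ℝ)) i = a := by simp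
      rw [hi]
      fin_cases i
      · exact ha
      · exact h1.trans hb
      · exact (h1.trans h2).trans hc
  have hdot : f ⬝ᵥ (fun _ => (1:ℝ)) = a + b + c := by
    simp [dotProduct, Fin.sum_univ_three]
    rfl
  constructor
  · intro hne hmem
    apply hne
    rcases hmem with hm | hm
    · obtain ⟨h1, h2⟩ := hspan.mp hm
      rw [h1, h2]; ring
    · rw [Set.mem_setOf_eq, hdot] at hm
      rw [hm]; ring
  · intro hnmem
    have h1 : ¬ (a = b ∧ b = c) := fun h => hnmem (Or.inl (hspan.mpr h))
    have h2 : a + b + c ≠ 0 := fun h => hnmem (Or.inr (by rw [Set.mem_setOf_eq, hdot]; exact h))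
    have hq : a^2 + b^2 + c^2 - a*b - b*c - c*a ≠ 0 := by
      intro hq0
      apply h1
      constructor <;> nlinarith [sq_nonneg (a-b), sq_nonneg (b-c), sq_nonneg (c-a)]
    intro h
    have : (a + b + c) * (a^2 + b^2 + c^2 - a*b - b*c - c*a) = 0 := by linarith [neg_eq_zero.mp h]
    rcases mul_eq_zero.mp this with h' | h'
    · exact h2 h'
    · exact hq h'
end

section
/- For the Lorenz matrix L = [[−σ,σ,0],[ρ,−1,0],[0,0,−β]] with σ, ρ, β > 0 and any f ∈ ℝ³, det[f, Lf, L²f] = (1/2)·𝔰·(fᵀe₃)(fᵀHf), where 𝔰 = β² − (σ+1)β + σ(1−ρ), e₃ = (0,0,1)ᵀ, and H is the Hessian of the quadratic form ρx² − σy² + (σ−1)xy, i.e., fᵀHf = 2ρf₁² − 2σf₂² + 2(σ−1)f₁f₂. -/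
/-!
Write `L = diag(A, λ)` with `A` the `(x, y)`-block of the Lorenz matrix and `λ = -β`, and split
`f = (v, w)`. Expanding `det[f, Lf, L²f]` along its last row `(w, λw, λ²w)` and reducing `A²v`
by Cayley–Hamilton, `A² = (tr A) A - (det A) I`, every `2 × 2` minor becomes a multiple of
`det[v, Av]`, giving `det[f, Lf, L²f] = w · det[v, Av] · χ_A(λ)`. For the Lorenz block,
`χ_A(-β) = 𝔰` and `det[v, Av] = ρx² - σy² + (σ-1)xy = ½ vᵀHv`.
-/

open Matrix

theorem det_krylov_fin_three_of_blockDiagonal {R : Type*} [CommRing R] [Nontrivial R]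
    (a b c d l : R) (f : Fin 3 → R) (L : Matrix (Fin 3) (Fin 3) R)
    (hL : L = !![a, b, 0; c, d, 0; 0, 0, l]) :
    (of ![f, L *ᵥ f, L *ᵥ (L *ᵥ f)])ᵀ.det =
      f 2 * (of ![![f 0, f 1], !![a, b; c, d] *ᵥ ![f 0, f 1]])ᵀ.det *
        (!![a, b; c, d]).charpoly.eval l := by
  subst hL
  simp only [det_transpose, det_fin_three, det_fin_two, charpoly_fin_two, trace_fin_two]
  simp [dotProduct, Fin.sum_univ_succ]
  ring

theorem lorenz_det_identity_general (σ ρ β : ℝ)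
    (f : Fin 3 → ℝ)
    (L : Matrix (Fin 3) (Fin 3) ℝ)
    (hL : L = !![-σ, σ, 0; ρ, -1, 0; 0, 0, -β]) :
    (Matrix.of ![f, L.mulVec f, L.mulVec (L.mulVec f)]).transpose.det =
      (1 / 2 : ℝ) * (β ^ 2 - (σ + 1) * β + σ * (1 - ρ)) * (f 2) *
        (2 * ρ * f 0 ^ 2 - 2 * σ * f 1 ^ 2 + 2 * (σ - 1) * f 0 * f 1) := by
  have hχ : (!![-σ, σ; ρ, -1]).charpoly.eval (-β) = β ^ 2 - (σ + 1) * β + σ * (1 - ρ) := by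
    simp [charpoly_fin_two, trace_fin_two, det_fin_two]
    ring
  have hkrylov : (of ![![f 0, f 1], !![-σ, σ; ρ, -1] *ᵥ ![f 0, f 1]])ᵀ.det =
      ρ * f 0 ^ 2 - σ * f 1 ^ 2 + (σ - 1) * f 0 * f 1 := by
    simp [det_fin_two]
    ring
  rw [det_krylov_fin_three_of_blockDiagonal _ _ _ _ _ f L hL, hχ, hkrylov]
  ring

/-- Lorenz determinant identity: for L = [[−σ,σ,0],[ρ,−1,0],[0,0,−β]],
det[f, Lf, L²f] = (1/2)·𝔰·(fᵀe₃)(fᵀHf), where 𝔰 = β² − (σ+1)β + σ(1−ρ)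
and fᵀHf = 2ρf₁² − 2σf₂² + 2(σ−1)f₁f₂. -/
theorem lorenz_det_identity (σ ρ β : ℝ) (hσ : 0 < σ) (hρ : 0 < ρ) (hβ : 0 < β)
    (f : Fin 3 → ℝ)
    (L : Matrix (Fin 3) (Fin 3) ℝ)
    (hL : L = !![-σ, σ, 0; ρ, -1, 0; 0, 0, -β]) :
    (Matrix.of ![f, L.mulVec f, L.mulVec (L.mulVec f)]).transpose.det =
      (1 / 2 : ℝ) * (β ^ 2 - (σ + 1) * β + σ * (1 - ρ)) * (f 2) *
        (2 * ρ * f 0 ^ 2 - 2 * σ * f 1 ^ 2 + 2 * (σ - 1) * f 0 * f 1) :=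
  lorenz_det_identity_general σ ρ β f L hL
end

section
/- Consider the single-input system ẋ = yz, ẏ = xz, ż = xy in ℝ³ with constant control vector f = (f₁, f₂, f₃). The strong accessibility subspace sequence S₀ = span{f}, S_{λ+1} = S_λ + span{Φ(ω) : ω ∈ S_λ} with Φ(x) = (x₂x₃, x₃x₁, x₁x₂) satisfies S₂ = ℝ³ if and only if (f₁² − f₂²)(f₂² − f₃²)(f₃² − f₁²) ≠ 0. -/
/-- S₀ = span{f}, S_{λ+1} = S_λ + span{Φ(ω) : ω ∈ S_λ}. -/
def SseqPhi (Φ : (Fin 3 → ℝ) → (Fin 3 → ℝ)) (S0 : Submodule ℝ (Fin 3 → ℝ)) :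
    ℕ → Submodule ℝ (Fin 3 → ℝ)
  | 0 => S0
  | l + 1 => SseqPhi Φ S0 l ⊔ Submodule.span ℝ (Φ '' (SseqPhi Φ S0 l))

private lemma seq_le_ker (Φ : (Fin 3 → ℝ) → (Fin 3 → ℝ)) (f : Fin 3 → ℝ)
    (L : (Fin 3 → ℝ) →ₗ[ℝ] ℝ) (hf : L f = 0)
    (hPhi : ∀ x, L x = 0 → L (Φ x) = 0) (n : ℕ) :
    SseqPhi Φ (Submodule.span ℝ {f}) n ≤ LinearMap.ker L := by
  induction n with
  | zero =>
      show Submodule.span ℝ {f} ≤ _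
      rw [Submodule.span_le, Set.singleton_subset_iff]
      exact hf
  | succ n ih =>
      show SseqPhi Φ _ n ⊔ Submodule.span ℝ (Φ '' (SseqPhi Φ _ n)) ≤ _
      refine sup_le ih ?_
      rw [Submodule.span_le]
      rintro y ⟨x, hx, rfl⟩
      exact hPhi x (ih hx)

private lemma seq_ne_top (Φ : (Fin 3 → ℝ) → (Fin 3 → ℝ)) (f : Fin 3 → ℝ)
    (L : (Fin 3 → ℝ) →ₗ[ℝ] ℝ) (hf : L f = 0)
    (hPhi : ∀ x, L x = 0 → L (Φ x) = 0) (v : Fin 3 → ℝ) (hv : L v ≠ 0) :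
    SseqPhi Φ (Submodule.span ℝ {f}) 2 ≠ ⊤ := by
  intro h
  exact hv (seq_le_ker Φ f L hf hPhi 2 (h ▸ Submodule.mem_top))

/-- For the system ẋ = yz, ẏ = xz, ż = xy with a single constant control
vector f, S₂ = ℝ³ iff (f₁²−f₂²)(f₂²−f₃²)(f₃²−f₁²) ≠ 0. -/
theorem hypergraph_accessibility_iff (f : Fin 3 → ℝ) :
    SseqPhi (fun x => ![x 1 * x 2, x 2 * x 0, x 0 * x 1]) (Submodule.span ℝ {f}) 2 = ⊤ ↔
      (f 0 ^ 2 - f 1 ^ 2) * (f 1 ^ 2 - f 2 ^ 2) * (f 2 ^ 2 - f 0 ^ 2) ≠ 0 := by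
  set Φ : (Fin 3 → ℝ) → (Fin 3 → ℝ) := fun x => ![x 1 * x 2, x 2 * x 0, x 0 * x 1]
    with hPhidef
  constructor
  · -- if some squares coincide, S₂ stays in a proper plane
    intro htop
    by_contra hD
    have h3 : (f 0 - f 1) * (f 0 + f 1) * ((f 1 - f 2) * (f 1 + f 2))
        * ((f 2 - f 0) * (f 2 + f 0)) = 0 := by nlinarith [hD, sq_nonneg (f 0)]
    -- case split
    rcases mul_eq_zero.1 h3 with h12 | h20
    · rcases mul_eq_zero.1 h12 with h01 | h12'
      · rcases mul_eq_zero.1 h01 with h | h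
        · -- f 0 = f 1
          refine seq_ne_top Φ f (LinearMap.proj 0 - (1:ℝ) • LinearMap.proj 1) ?_ ?_
            (Pi.single 0 1) ?_ htop
          · simp; linarith
          · intro x hx
            simp [hPhidef] at hx ⊢
            linear_combination (-(x 2)) * hx
          · simp
        · -- f 0 = - f 1
          refine seq_ne_top Φ f (LinearMap.proj 0 - (-1:ℝ) • LinearMap.proj 1) ?_ ?_
            (Pi.single 0 1) ?_ htop
          · simp; linarith
          · intro x hx
            simp [hPhidef] at hx ⊢
            linear_combination (x 2) * hx
          · simp
      · rcases mul_eq_zero.1 h12' with h | h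
        · -- f 1 = f 2
          refine seq_ne_top Φ f (LinearMap.proj 1 - (1:ℝ) • LinearMap.proj 2) ?_ ?_
            (Pi.single 1 1) ?_ htop
          · simp; linarith
          · intro x hx
            simp [hPhidef] at hx ⊢
            linear_combination (-(x 0)) * hx
          · simp
        · -- f 1 = - f 2
          refine seq_ne_top Φ f (LinearMap.proj 1 - (-1:ℝ) • LinearMap.proj 2) ?_ ?_
            (Pi.single 1 1) ?_ htop
          · simp; linarith
          · intro x hx
            simp [hPhidef] at hx ⊢
            linear_combination (x 0) * hx
          · simp
    · rcases mul_eq_zero.1 h20 with h | h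
      · -- f 2 = f 0
        refine seq_ne_top Φ f (LinearMap.proj 2 - (1:ℝ) • LinearMap.proj 0) ?_ ?_
          (Pi.single 2 1) ?_ htop
        · simp; linarith
        · intro x hx
          simp [hPhidef] at hx ⊢
          linear_combination (-(x 1)) * hx
        · simp
      · -- f 2 = - f 0
        refine seq_ne_top Φ f (LinearMap.proj 2 - (-1:ℝ) • LinearMap.proj 0) ?_ ?_
          (Pi.single 2 1) ?_ htop
        · simp; linarith
        · intro x hx
          simp [hPhidef] at hx ⊢
          linear_combination (x 1) * hx
        · simp
  · intro hD
    set S0 : Submodule ℝ (Fin 3 → ℝ) := Submodule.span ℝ {f} with hS0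
    have hstep : ∀ n, SseqPhi Φ S0 (n+1)
        = SseqPhi Φ S0 n ⊔ Submodule.span ℝ (Φ '' (SseqPhi Φ S0 n)) := fun n => rfl
    have hfS : ∀ n, f ∈ SseqPhi Φ S0 n := by
      intro n
      induction n with
      | zero => exact Submodule.mem_span_singleton_self f
      | succ n ih => rw [hstep]; exact Submodule.mem_sup_left ih
    have hmem : ∀ n, ∀ x ∈ SseqPhi Φ S0 n, Φ x ∈ SseqPhi Φ S0 (n+1) := by
      intro n x hx
      rw [hstep]
      exact Submodule.mem_sup_right (Submodule.subset_span ⟨x, hx, rfl⟩)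
    have hP1 : Φ f ∈ SseqPhi Φ S0 1 := hmem 0 f (hfS 0)
    have hP2 : Φ f ∈ SseqPhi Φ S0 2 := by rw [hstep]; exact Submodule.mem_sup_left hP1
    have hu : Φ (f + Φ f) ∈ SseqPhi Φ S0 2 :=
      hmem 1 _ (add_mem (hfS 1) hP1)
    have hv : Φ (f - Φ f) ∈ SseqPhi Φ S0 2 :=
      hmem 1 _ (sub_mem (hfS 1) hP1)
    set g : Fin 3 → ℝ := ![f 0 * (f 1 ^ 2 + f 2 ^ 2), f 1 * (f 2 ^ 2 + f 0 ^ 2),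
      f 2 * (f 0 ^ 2 + f 1 ^ 2)] with hgdef
    have hg : g = (1/2 : ℝ) • Φ (f + Φ f) - (1/2 : ℝ) • Φ (f - Φ f) := by
      funext i
      fin_cases i <;> simp [hgdef, hPhidef, Matrix.vecHead, Matrix.vecTail] <;> ring
    have hgS : g ∈ SseqPhi Φ S0 2 := by
      rw [hg]
      exact sub_mem (Submodule.smul_mem _ _ hu) (Submodule.smul_mem _ _ hv)
    set M : Matrix (Fin 3) (Fin 3) ℝ := ![f, Φ f, g] with hM
    have hdet : M.det = (f 0 ^ 2 - f 1 ^ 2) * (f 1 ^ 2 - f 2 ^ 2) * (f 2 ^ 2 - f 0 ^ 2) := by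
      rw [Matrix.det_fin_three]
      simp [hM, hgdef, hPhidef]
      ring
    have hMd : IsUnit M.det := isUnit_iff_ne_zero.2 (by rw [hdet]; exact hD)
    rw [eq_top_iff]
    intro x _
    set c : Fin 3 → ℝ := Matrix.vecMul x M⁻¹ with hc
    have hx : Matrix.vecMul c M = x := by
      rw [hc, Matrix.vecMul_vecMul, Matrix.nonsing_inv_mul M hMd, Matrix.vecMul_one]
    have hexp : Matrix.vecMul c M = c 0 • f + c 1 • Φ f + c 2 • g := by
      funext i
      simp [Matrix.vecMul, dotProduct, Fin.sum_univ_three, hM]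
    rw [← hx, hexp]
    exact add_mem (add_mem (Submodule.smul_mem _ _ (hfS 2)) (Submodule.smul_mem _ _ hP2))
      (Submodule.smul_mem _ _ hgS)
end

section
/- For the Lorenz system drift f₀(x) = Lx + Φ(x) with Φ(x) = (0, −x₁x₃, x₁x₂) and a single control vector f ∈ span{e₃}^⊥ (i.e., f₃ = 0), the bad bracket value [[f₀,f],f](0) = 2Φ(f) = (0, 0, 2f₁f₂) lies in span{e₃}, while span{f, Lf, L²f} ⊆ span{e₁, e₂}. Hence if f₁f₂ ≠ 0 then [[f₀,f],f](0) ∉ span{f, Lf, L²f}. -/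
theorem mem_span_single_zero_single_one_iff {R : Type*} [CommRing R] (v : Fin 3 → R) :
    v ∈ Submodule.span R {(Pi.single 0 1 : Fin 3 → R), (Pi.single 1 1 : Fin 3 → R)} ↔
      v 2 = 0 := by
  rw [Submodule.mem_span_pair]
  constructor
  · rintro ⟨a, b, rfl⟩
    simp
  · intro hv
    refine ⟨v 0, v 1, funext fun i => ?_⟩
    fin_cases i <;> simp [hv]

theorem span_iterates_le_of_mapsTo {R M : Type*} [Semiring R] [AddCommMonoid M] [Module R M]
    {W : Submodule R M} {L : M → M} (hL : ∀ x ∈ W, L x ∈ W) {f : M} (hf : f ∈ W) :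
    Submodule.span R {f, L f, L (L f)} ≤ W := by
  rw [Submodule.span_le]
  rintro x (rfl | rfl | rfl)
  exacts [hf, hL _ hf, hL _ (hL _ hf)]

theorem lorenz_bad_bracket_general (σ ρ β : ℝ)
    (L : (Fin 3 → ℝ) → (Fin 3 → ℝ))
    (hL : ∀ x, L x = ![-σ * x 0 + σ * x 1, ρ * x 0 - x 1, -β * x 2])
    (Φ : (Fin 3 → ℝ) → (Fin 3 → ℝ))
    (hΦ : ∀ x, Φ x = ![0, -(x 0 * x 2), x 0 * x 1])
    (f : Fin 3 → ℝ) (hf : f 2 = 0) :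
    ((2 : ℝ) • Φ f ∈ Submodule.span ℝ {(Pi.single 2 1 : Fin 3 → ℝ)}) ∧
    (Submodule.span ℝ {f, L f, L (L f)} ≤
      Submodule.span ℝ {(Pi.single 0 1 : Fin 3 → ℝ), (Pi.single 1 1 : Fin 3 → ℝ)}) ∧
    (f 0 * f 1 ≠ 0 → (2 : ℝ) • Φ f ∉ Submodule.span ℝ {f, L f, L (L f)}) := by
  have hplane : Submodule.span ℝ {f, L f, L (L f)} ≤
      Submodule.span ℝ {(Pi.single 0 1 : Fin 3 → ℝ), (Pi.single 1 1 : Fin 3 → ℝ)} := by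
    refine span_iterates_le_of_mapsTo (fun x hx => ?_)
      ((mem_span_single_zero_single_one_iff f).2 hf)
    rw [mem_span_single_zero_single_one_iff] at hx ⊢
    simp [hL, hx]
  have hbracket : (2 : ℝ) • Φ f = (2 * (f 0 * f 1)) • (Pi.single 2 1 : Fin 3 → ℝ) := by
    funext i
    fin_cases i <;> simp [hΦ, hf]
  refine ⟨hbracket ▸ Submodule.mem_span_singleton.2 ⟨_, rfl⟩, hplane,
    fun hne hmem => hne ?_⟩
  have hcoord := (mem_span_single_zero_single_one_iff _).1 (hplane hmem)
  rw [hbracket] at hcoord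
  simpa using hcoord

/-- Lorenz bad-bracket obstruction: for f with f₃ = 0, the bad bracket value
2Φ(f) = (0,0,2f₁f₂) lies in span{e₃}, span{f, Lf, L²f} ⊆ span{e₁,e₂}, and if
f₁f₂ ≠ 0 then 2Φ(f) ∉ span{f, Lf, L²f}. -/
theorem lorenz_bad_bracket (σ ρ β : ℝ) (hσ : 0 < σ) (hρ : 0 < ρ) (hβ : 0 < β)
    (L : (Fin 3 → ℝ) → (Fin 3 → ℝ))
    (hL : ∀ x, L x = ![-σ * x 0 + σ * x 1, ρ * x 0 - x 1, -β * x 2])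
    (Φ : (Fin 3 → ℝ) → (Fin 3 → ℝ))
    (hΦ : ∀ x, Φ x = ![0, -(x 0 * x 2), x 0 * x 1])
    (f : Fin 3 → ℝ) (hf : f 2 = 0) :
    ((2 : ℝ) • Φ f ∈ Submodule.span ℝ {(Pi.single 2 1 : Fin 3 → ℝ)}) ∧
    (Submodule.span ℝ {f, L f, L (L f)} ≤
      Submodule.span ℝ {(Pi.single 0 1 : Fin 3 → ℝ), (Pi.single 1 1 : Fin 3 → ℝ)}) ∧
    (f 0 * f 1 ≠ 0 → (2 : ℝ) • Φ f ∉ Submodule.span ℝ {f, L f, L (L f)}) :=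
  lorenz_bad_bracket_general σ ρ β L hL Φ hΦ f hf
end
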